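/- arXiv:1803.07043 — 5 statements merged into one kernel-verified Lean document; each statement's English description precedes it below -/
import Mathlib

section
/- The stepsize ρ returned by the backtracking procedure with halving satisfies ρ ≥ min{1/(2(L + Δ)), ρ⁰}, where ρ⁰ is the initial trial stepsize. -/
open RealInnerProductSpace

theorem backtracking_stepsize_lower_bound (L Δ ρ0 : ℝ) (hL : 0 ≤ L) (hΔ : 0 < Δ)
    (hρ0 : 0 < ρ0) (accept : ℕ → Prop)
    (ρ : ℕ → ℝ) (hρ : ∀ j : ℕ, ρ j = (2 : ℝ) ^ (1 - (j : ℤ)) * ρ0)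
    (hguar : ∀ j : ℕ, ρ j ≤ 1 / (L + Δ) → accept j)
    (J : ℕ) (hJ : 1 ≤ J) (hfirst : ∀ j : ℕ, 1 ≤ j → j < J → ¬ accept j) :
    ρ J ≥ min (1 / (2 * (L + Δ))) ρ0 := by
  have hLΔ : 0 < L + Δ := by linarith
  rcases eq_or_lt_of_le hJ with h1 | h2
  · -- J = 1 : ρ 1 = ρ0
    have : ρ J = ρ0 := by
      rw [← h1, hρ]; norm_num
    rw [this]
    exact min_le_right _ _
  · -- J ≥ 2 : step J-1 was rejected
    have hJ1 : 1 ≤ J - 1 := by omega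
    have hlt : J - 1 < J := by omega
    have hrej := hfirst (J - 1) hJ1 hlt
    have hbig : ¬ ρ (J - 1) ≤ 1 / (L + Δ) := fun h => hrej (hguar _ h)
    push_neg at hbig
    have hhalf : ρ J = ρ (J - 1) / 2 := by
      rw [hρ, hρ]
      have : ((J : ℤ)) = ((J - 1 : ℕ) : ℤ) + 1 := by
        have : (1 : ℤ) ≤ (J : ℤ) := by exact_mod_cast hJ
        push_cast [Nat.cast_sub hJ]; ring
      rw [this]
      rw [show (1 - (((J - 1 : ℕ) : ℤ) + 1)) = (1 - ((J - 1 : ℕ) : ℤ)) - 1 by ring]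
      rw [zpow_sub₀ (by norm_num : (2:ℝ) ≠ 0)]
      ring
    have : ρ J > 1 / (2 * (L + Δ)) := by
      rw [hhalf]
      have : 1 / (2 * (L + Δ)) = (1 / (L + Δ)) / 2 := by field_simp
      rw [this]
      linarith
    exact le_trans (min_le_left _ _) (le_of_lt this)
end

section
/- Let T be an affine operator T(x) = T^l x + c with T^l linear. Fix z, w ∈ H, Δ > 0, and suppose ξ := Tz - w ≠ 0. For any ρ with 0 < ρ ≤ ‖ξ‖²/(Δ‖ξ‖² + ⟨ξ, T^l ξ⟩) (assuming the denominator is positive), setting x = z - ρξ and y = Tx, we have ⟨z - x, y - w⟩ ≥ Δ‖z - x‖². -/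
open RealInnerProductSpace

theorem affine_stepsize_acceptance {H : Type*} [NormedAddCommGroup H] [InnerProductSpace ℝ H]
    [CompleteSpace H] (Tl : H →L[ℝ] H) (c : H)
    (z w : H) (Δ : ℝ) (hΔ : 0 < Δ)
    (ξ : H) (hξdef : ξ = (Tl z + c) - w) (hξ : ξ ≠ 0)
    (hdenom : 0 < Δ * ‖ξ‖ ^ 2 + ⟪ξ, Tl ξ⟫)
    (ρ : ℝ) (hρ : 0 < ρ) (hρle : ρ ≤ ‖ξ‖ ^ 2 / (Δ * ‖ξ‖ ^ 2 + ⟪ξ, Tl ξ⟫))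
    (x y : H) (hx : x = z - ρ • ξ) (hy : y = Tl x + c) :
    ⟪z - x, y - w⟫ ≥ Δ * ‖z - x‖ ^ 2 := by
  have hzx : z - x = ρ • ξ := by rw [hx]; abel
  have hyw : y - w = ξ - ρ • Tl ξ := by
    rw [hy, hx, hξdef, map_sub, map_smul]; abel
  have hkey : ρ * (Δ * ‖ξ‖ ^ 2 + ⟪ξ, Tl ξ⟫) ≤ ‖ξ‖ ^ 2 :=
    (le_div_iff₀ hdenom).mp hρle
  rw [hzx, hyw, inner_smul_left, inner_sub_right, inner_smul_right, real_inner_self_eq_norm_sq,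
    norm_smul, Real.norm_eq_abs, abs_of_pos hρ]
  simp only [conj_trivial]
  nlinarith [mul_le_mul_of_nonneg_left hkey hρ.le]
end

section
/- Let T_1, ..., T_n be monotone operators with T_i : H_i → 2^{H_i}, G_i : H₀ → H_i bounded linear (G_n = I), and let y_i ∈ T_i x_i for all i. If (z, w₁, ..., w_{n-1}) satisfies w_i ∈ T_i(G_i z) for i ≤ n-1 and -∑_{i=1}^{n-1} G_i* w_i ∈ T_n z, then φ(z, w) := ∑_{i=1}^{n-1} ⟨G_i z - x_i, y_i - w_i⟩ + ⟨z - x_n, y_n + ∑ G_i* w_i⟩ ≤ 0. -/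
open RealInnerProductSpace

theorem separator_nonpositive_on_solutions {H0 : Type*} [NormedAddCommGroup H0]
    [InnerProductSpace ℝ H0] [CompleteSpace H0] {m : ℕ} {K : Fin m → Type*}
    [∀ i, NormedAddCommGroup (K i)] [∀ i, InnerProductSpace ℝ (K i)]
    [∀ i, CompleteSpace (K i)]
    (T : ∀ i, K i → Set (K i)) (Tn : H0 → Set H0)
    (hTmono : ∀ i, ∀ a b u v, u ∈ T i a → v ∈ T i b → (0:ℝ) ≤ ⟪a - b, u - v⟫)
    (hTnmono : ∀ a b u v, u ∈ Tn a → v ∈ Tn b → (0:ℝ) ≤ ⟪a - b, u - v⟫)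
    (G : ∀ i, H0 →L[ℝ] K i) (x y : ∀ i, K i) (xn yn : H0)
    (hy : ∀ i, y i ∈ T i (x i)) (hyn : yn ∈ Tn xn)
    (z : H0) (w : ∀ i, K i)
    (hw : ∀ i, w i ∈ T i (G i z))
    (hwn : -∑ i, (G i).adjoint (w i) ∈ Tn z) :
    (∑ i, ⟪G i z - x i, y i - w i⟫) +
      ⟪z - xn, yn + ∑ i, (G i).adjoint (w i)⟫ ≤ 0 := by
  have h1 : ∀ i, ⟪G i z - x i, y i - w i⟫ ≤ 0 := by
    intro i
    have h := hTmono i (G i z) (x i) (w i) (y i) (hw i) (hy i)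
    simp only [inner_sub_right] at h ⊢
    linarith
  have h2 : ⟪z - xn, yn + ∑ i, (G i).adjoint (w i)⟫ ≤ 0 := by
    have h := hTnmono z xn (-∑ i, (G i).adjoint (w i)) yn hwn hyn
    simp only [inner_sub_right, inner_add_right, inner_neg_right] at h ⊢
    linarith
  have hsum : (∑ i, ⟪G i z - x i, y i - w i⟫) ≤ 0 :=
    Finset.sum_nonpos fun i _ => h1 i
  linarith
end

section
/- The extended solution set S = {(z, w₁,...,w_{n-1}) : w_i ∈ T_i(G_i z) for i = 1,...,n-1 and -∑_{i=1}^{n-1} G_i* w_i ∈ T_n z} is closed and convex, where each T_i is maximal monotone and each G_i is bounded linear. -/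
open RealInnerProductSpace

theorem solution_set_closed_convex {H0 : Type*} [NormedAddCommGroup H0]
    [InnerProductSpace ℝ H0] [CompleteSpace H0] {m : ℕ} {K : Fin m → Type*}
    [∀ i, NormedAddCommGroup (K i)] [∀ i, InnerProductSpace ℝ (K i)]
    [∀ i, CompleteSpace (K i)]
    (T : ∀ i, K i → Set (K i)) (Tn : H0 → Set H0)
    (hTmono : ∀ i, ∀ a b u v, u ∈ T i a → v ∈ T i b → (0:ℝ) ≤ ⟪a - b, u - v⟫)
    (hTmax : ∀ i, ∀ a u, (∀ b v, v ∈ T i b → (0:ℝ) ≤ ⟪a - b, u - v⟫) → u ∈ T i a)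
    (hTnmono : ∀ a b u v, u ∈ Tn a → v ∈ Tn b → (0:ℝ) ≤ ⟪a - b, u - v⟫)
    (hTnmax : ∀ a u, (∀ b v, v ∈ Tn b → (0:ℝ) ≤ ⟪a - b, u - v⟫) → u ∈ Tn a)
    (G : ∀ i, H0 →L[ℝ] K i)
    (S : Set (H0 × (∀ i, K i)))
    (hS : S = {p | (∀ i, p.2 i ∈ T i (G i p.1)) ∧
      -∑ i, (G i).adjoint (p.2 i) ∈ Tn p.1}) :
    IsClosed S ∧ Convex ℝ S := by
  subst hS
  -- graphs are nonempty
  obtain ⟨c0, u0, hcu0⟩ : ∃ c0 u0 : ∀ i, K i, ∀ i, u0 i ∈ T i (c0 i) := by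
    have h : ∀ i : Fin m, ∃ c u : K i, u ∈ T i c := by
      intro i
      by_contra h
      push_neg at h
      exact h 0 0 (hTmax i 0 0 fun b v hv => absurd hv (h b v))
    choose c u h using h
    exact ⟨c, u, h⟩
  obtain ⟨b0, v0, hv0⟩ : ∃ b v : H0, v ∈ Tn b := by
    by_contra h
    push_neg at h
    exact h 0 0 (hTnmax 0 0 fun b v hv => absurd hv (h b v))
  -- key: S is an intersection of half-spaces
  have hkey : {p : H0 × (∀ i, K i) | (∀ i, p.2 i ∈ T i (G i p.1)) ∧
      -∑ i, (G i).adjoint (p.2 i) ∈ Tn p.1} =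
      ⋂ (c : ∀ i, K i) (u : ∀ i, K i) (b : H0) (v : H0)
        (_ : (∀ i, u i ∈ T i (c i)) ∧ v ∈ Tn b),
      {p : H0 × (∀ i, K i) | 0 ≤ (∑ i, ⟪G i p.1 - c i, p.2 i - u i⟫) +
        ⟪p.1 - b, (-∑ i, (G i).adjoint (p.2 i)) - v⟫} := by
    apply Set.Subset.antisymm
    · intro p hp
      simp only [Set.mem_setOf_eq] at hp
      simp only [Set.mem_iInter, Set.mem_setOf_eq]
      rintro c u b v ⟨hu, hv⟩
      exact add_nonneg (Finset.sum_nonneg fun i _ => hTmono i _ _ _ _ (hp.1 i) (hu i))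
        (hTnmono _ _ _ _ hp.2 hv)
    · intro p hp
      simp only [Set.mem_iInter, Set.mem_setOf_eq] at hp
      have H : ∀ (c u : ∀ i, K i) (b v : H0), (∀ i, u i ∈ T i (c i)) → v ∈ Tn b →
          0 ≤ (∑ i, ⟪G i p.1 - c i, p.2 i - u i⟫) +
            ⟪p.1 - b, (-∑ i, (G i).adjoint (p.2 i)) - v⟫ :=
        fun c u b v h1 h2 => hp c u b v ⟨h1, h2⟩
      clear hp
      set A : Fin m → Set ℝ := fun i =>
        {r | ∃ c u, u ∈ T i c ∧ r = ⟪G i p.1 - c, p.2 i - u⟫} with hA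
      set An : Set ℝ :=
        {r | ∃ b v, v ∈ Tn b ∧ r = ⟪p.1 - b, (-∑ i, (G i).adjoint (p.2 i)) - v⟫} with hAn
      have hAne : ∀ i, (A i).Nonempty := fun i => ⟨_, c0 i, u0 i, hcu0 i, rfl⟩
      have hAnne : An.Nonempty := ⟨_, b0, v0, hv0, rfl⟩
      -- bddBelow of each A i
      have hbddA : ∀ i, BddBelow (A i) := by
        intro i
        refine ⟨-((∑ j ∈ Finset.univ.erase i, ⟪G j p.1 - c0 j, p.2 j - u0 j⟫) +
          ⟪p.1 - b0, (-∑ j, (G j).adjoint (p.2 j)) - v0⟫), ?_⟩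
        rintro r ⟨c, u, hu, rfl⟩
        have hH := H (Function.update c0 i c) (Function.update u0 i u) b0 v0 ?_ hv0
        · have hsum : (∑ j, ⟪G j p.1 - Function.update c0 i c j,
              p.2 j - Function.update u0 i u j⟫) =
              ⟪G i p.1 - c, p.2 i - u⟫ +
                ∑ j ∈ Finset.univ.erase i, ⟪G j p.1 - c0 j, p.2 j - u0 j⟫ := by
            rw [← Finset.add_sum_erase _ _ (Finset.mem_univ i)]
            congr 1
            · rw [Function.update_self, Function.update_self]
            · refine Finset.sum_congr rfl fun j hj => ?_
              rw [Function.update_of_ne (Finset.ne_of_mem_erase hj),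
                Function.update_of_ne (Finset.ne_of_mem_erase hj)]
          rw [hsum] at hH
          linarith
        · intro j
          by_cases hj : j = i
          · subst hj; rw [Function.update_self, Function.update_self]; exact hu
          · rw [Function.update_of_ne hj, Function.update_of_ne hj]; exact hcu0 j
      have hbddAn : BddBelow An := by
        refine ⟨-(∑ j, ⟪G j p.1 - c0 j, p.2 j - u0 j⟫), ?_⟩
        rintro r ⟨b, v, hv, rfl⟩
        have hH := H c0 u0 b v hcu0 hv
        linarith
      set s : Fin m → ℝ := fun i => sInf (A i) with hs
      set sn : ℝ := sInf An with hsn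
      -- each s i ≤ 0, sn ≤ 0
      have hsle : ∀ i, s i ≤ 0 := by
        intro i
        by_contra hlt
        push_neg at hlt
        have hmem : p.2 i ∈ T i (G i p.1) := by
          refine hTmax i _ _ fun b v hv => ?_
          exact le_trans hlt.le (csInf_le (hbddA i) ⟨b, v, hv, rfl⟩)
        have h0 : (0:ℝ) ∈ A i := ⟨G i p.1, p.2 i, hmem, by simp⟩
        exact absurd (csInf_le (hbddA i) h0) (not_le.mpr hlt)
      have hsnle : sn ≤ 0 := by
        by_contra hlt
        push_neg at hlt
        have hmem : -∑ i, (G i).adjoint (p.2 i) ∈ Tn p.1 := by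
          refine hTnmax _ _ fun b v hv => ?_
          exact le_trans hlt.le (csInf_le hbddAn ⟨b, v, hv, rfl⟩)
        have h0 : (0:ℝ) ∈ An := ⟨p.1, -∑ i, (G i).adjoint (p.2 i), hmem, by simp⟩
        exact absurd (csInf_le hbddAn h0) (not_le.mpr hlt)
      -- total sum of infima is nonnegative
      have htot : 0 ≤ (∑ i, s i) + sn := by
        refine le_of_forall_pos_le_add fun ε hε => ?_
        have hε' : (0:ℝ) < ε / (m + 1) := by positivity
        have hch : ∀ i : Fin m, ∃ c u, u ∈ T i c ∧
            ⟪G i p.1 - c, p.2 i - u⟫ < s i + ε / (m + 1) := by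
          intro i
          obtain ⟨r, hrA, hrlt⟩ := exists_lt_of_csInf_lt (hAne i)
            (lt_add_of_pos_right (s i) hε')
          obtain ⟨c, u, hu, rfl⟩ := hrA
          exact ⟨c, u, hu, hrlt⟩
        choose c u hu hlt using hch
        obtain ⟨rn, hrnA, hrnlt⟩ := exists_lt_of_csInf_lt hAnne
          (lt_add_of_pos_right sn hε')
        obtain ⟨b, v, hv, rfl⟩ := hrnA
        have hH := H c u b v hu hv
        have hsum : (∑ i, ⟪G i p.1 - c i, p.2 i - u i⟫) ≤
            (∑ i, s i) + m * (ε / (m + 1)) := by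
          calc (∑ i, ⟪G i p.1 - c i, p.2 i - u i⟫)
              ≤ ∑ i, (s i + ε / (m + 1)) :=
                Finset.sum_le_sum fun i _ => (hlt i).le
            _ = (∑ i, s i) + m * (ε / (m + 1)) := by
                rw [Finset.sum_add_distrib, Finset.sum_const, Finset.card_univ,
                  Fintype.card_fin, nsmul_eq_mul]
        have hme : ((m : ℝ) + 1) * (ε / (m + 1)) = ε := by
          field_simp
        have hm1 : (m : ℝ) * (ε / (m + 1)) + ε / (m + 1) = ε := by
          nlinarith [hme]
        linarith
      -- hence each infimum is nonnegative
      have hsge : ∀ i, 0 ≤ s i := by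
        intro i
        have h1 : (∑ j, s j) = s i + ∑ j ∈ Finset.univ.erase i, s j :=
          (Finset.add_sum_erase _ _ (Finset.mem_univ i)).symm
        have h2 : (∑ j ∈ Finset.univ.erase i, s j) ≤ 0 :=
          Finset.sum_nonpos fun j _ => hsle j
        linarith
      have hsnge : 0 ≤ sn := by
        have h2 : (∑ j, s j) ≤ 0 := Finset.sum_nonpos fun j _ => hsle j
        linarith
      refine ⟨fun i => hTmax i _ _ fun b v hv => ?_, hTnmax _ _ fun b v hv => ?_⟩
      · exact le_trans (hsge i) (csInf_le (hbddA i) ⟨b, v, hv, rfl⟩)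
      · exact le_trans hsnge (csInf_le hbddAn ⟨b, v, hv, rfl⟩)
  rw [hkey]
  constructor
  · refine isClosed_iInter fun c => isClosed_iInter fun u => isClosed_iInter fun b =>
      isClosed_iInter fun v => isClosed_iInter fun _ => ?_
    refine isClosed_le continuous_const ?_
    apply Continuous.add
    · apply continuous_finset_sum
      intro i _
      exact Continuous.inner
        (((G i).continuous.comp continuous_fst).sub continuous_const)
        (((continuous_apply i).comp continuous_snd).sub continuous_const)
    · exact Continuous.inner (continuous_fst.sub continuous_const)
        ((Continuous.neg (continuous_finset_sum _ fun i _ =>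
          ((G i).adjoint.continuous.comp ((continuous_apply i).comp continuous_snd)))).sub
          continuous_const)
  · refine convex_iInter fun c => convex_iInter fun u => convex_iInter fun b =>
      convex_iInter fun v => convex_iInter fun _ => ?_
    -- affine representation
    have haff : ∀ p : H0 × (∀ i, K i),
        (∑ i, ⟪G i p.1 - c i, p.2 i - u i⟫) +
          ⟪p.1 - b, (-∑ i, (G i).adjoint (p.2 i)) - v⟫ =
        (∑ i, (⟪c i, u i⟫ - ⟪G i p.1, u i⟫ - ⟪c i, p.2 i⟫)) +
          (⟪b, v⟫ - ⟪p.1, v⟫ + ∑ i, ⟪G i b, p.2 i⟫) := by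
      intro p
      simp only [inner_sub_left, inner_sub_right, inner_neg_right, inner_sum, map_sub,
        ContinuousLinearMap.adjoint_inner_right, Finset.sum_sub_distrib]
      ring
    intro p hp q hq a a' ha ha' haa
    simp only [Set.mem_setOf_eq] at hp hq ⊢
    rw [haff] at hp hq ⊢
    have hg : ∀ i : Fin m,
        ⟪c i, u i⟫ - ⟪G i (a • p + a' • q).1, u i⟫ - ⟪c i, (a • p + a' • q).2 i⟫ =
        a * (⟪c i, u i⟫ - ⟪G i p.1, u i⟫ - ⟪c i, p.2 i⟫) +
          a' * (⟪c i, u i⟫ - ⟪G i q.1, u i⟫ - ⟪c i, q.2 i⟫) := by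
      intro i
      simp only [Prod.fst_add, Prod.snd_add, Prod.smul_fst, Prod.smul_snd,
        Pi.add_apply, Pi.smul_apply, map_add, map_smul, inner_add_left, inner_add_right,
        real_inner_smul_left, real_inner_smul_right]
      linear_combination (-⟪c i, u i⟫) * haa
    have hh : ⟪b, v⟫ - ⟪(a • p + a' • q).1, v⟫ + ∑ i, ⟪G i b, (a • p + a' • q).2 i⟫ =
        a * (⟪b, v⟫ - ⟪p.1, v⟫ + ∑ i, ⟪G i b, p.2 i⟫) +
          a' * (⟪b, v⟫ - ⟪q.1, v⟫ + ∑ i, ⟪G i b, q.2 i⟫) := by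
      simp only [Prod.fst_add, Prod.snd_add, Prod.smul_fst, Prod.smul_snd,
        Pi.add_apply, Pi.smul_apply, inner_add_left, inner_add_right,
        real_inner_smul_left, real_inner_smul_right, Finset.sum_add_distrib,
        ← Finset.mul_sum]
      linear_combination (-⟪b, v⟫) * haa
    have hcomb :
        (∑ i, (⟪c i, u i⟫ - ⟪G i (a • p + a' • q).1, u i⟫ - ⟪c i, (a • p + a' • q).2 i⟫)) +
          (⟪b, v⟫ - ⟪(a • p + a' • q).1, v⟫ + ∑ i, ⟪G i b, (a • p + a' • q).2 i⟫) =
        a * ((∑ i, (⟪c i, u i⟫ - ⟪G i p.1, u i⟫ - ⟪c i, p.2 i⟫)) +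
            (⟪b, v⟫ - ⟪p.1, v⟫ + ∑ i, ⟪G i b, p.2 i⟫)) +
        a' * ((∑ i, (⟪c i, u i⟫ - ⟪G i q.1, u i⟫ - ⟪c i, q.2 i⟫)) +
            (⟪b, v⟫ - ⟪q.1, v⟫ + ∑ i, ⟪G i b, q.2 i⟫)) := by
      rw [Finset.sum_congr rfl fun i _ => hg i, Finset.sum_add_distrib,
        ← Finset.mul_sum, ← Finset.mul_sum, hh]
      ring
    rw [hcomb]
    have h1 := mul_nonneg ha hp
    have h2 := mul_nonneg ha' hq
    linarith
end

section
/- Let S be a nonempty closed convex subset of a real Hilbert space H. Suppose a sequence p^k is generated by relaxed projections: p^{k+1} = p^k - (β_k max{0, φ_k(p^k)}/‖∇φ_k‖²)∇φ_k, where each φ_k is affine with nonzero gradient, φ_k ≤ 0 on S, and β_k ∈ [β̲, β̄] ⊂ (0, 2). Then the sequence {p^k} is bounded and ‖p^{k+1} - p^k‖ → 0. -/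
open RealInnerProductSpace Filter

theorem projection_method_basic {H : Type*} [NormedAddCommGroup H] [InnerProductSpace ℝ H]
    [CompleteSpace H] (S : Set H) (hSne : S.Nonempty) (hScl : IsClosed S)
    (hScv : Convex ℝ S)
    (βl βu : ℝ) (hβl : 0 < βl) (hβlu : βl ≤ βu) (hβu : βu < 2)
    (β : ℕ → ℝ) (hβ : ∀ k, β k ∈ Set.Icc βl βu)
    (φ : ℕ → H → ℝ) (g : ℕ → H) (hg : ∀ k, g k ≠ 0)
    (haff : ∀ k, ∀ p q : H, φ k p - φ k q = ⟪g k, p - q⟫)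
    (hsep : ∀ k, ∀ p ∈ S, φ k p ≤ 0)
    (p : ℕ → H)
    (hupd : ∀ k, p (k + 1) = p k - (β k * max 0 (φ k (p k)) / ‖g k‖ ^ 2) • g k) :
    (∃ C : ℝ, ∀ k, ‖p k‖ ≤ C) ∧
      Tendsto (fun k => ‖p (k + 1) - p k‖) atTop (nhds 0) := by
  obtain ⟨q, hq⟩ := hSne
  set a : ℕ → ℝ := fun k => ‖p k - q‖ ^ 2 with ha
  set c : ℝ := (2 - βu) / βu with hc
  have hβu0 : 0 < βu := lt_of_lt_of_le hβl hβlu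
  have hcpos : 0 < c := div_pos (by linarith) hβu0
  have key : ∀ k, a (k + 1) + c * ‖p (k + 1) - p k‖ ^ 2 ≤ a k := by
    intro k
    set m : ℝ := max 0 (φ k (p k)) with hm
    set t : ℝ := β k * m / ‖g k‖ ^ 2 with htdef
    have hgk : (0 : ℝ) < ‖g k‖ := norm_pos_iff.mpr (hg k)
    have hg2 : (0 : ℝ) < ‖g k‖ ^ 2 := by positivity
    have hm0 : 0 ≤ m := le_max_left _ _
    have hβk := hβ k
    have hβk0 : 0 < β k := lt_of_lt_of_le hβl hβk.1
    have ht : 0 ≤ t := by positivity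
    have hdiff : p (k + 1) - q = (p k - q) - t • g k := by rw [hupd k]; abel
    have hΔ : p (k + 1) - p k = -(t • g k) := by rw [hupd k]; abel
    have hΔn : ‖p (k + 1) - p k‖ ^ 2 = t ^ 2 * ‖g k‖ ^ 2 := by
      rw [hΔ, norm_neg, norm_smul, Real.norm_eq_abs, abs_of_nonneg ht, mul_pow]
    have hexp : a (k + 1) =
        a k - 2 * (t * ⟪g k, p k - q⟫) + t ^ 2 * ‖g k‖ ^ 2 := by
      show ‖p (k + 1) - q‖ ^ 2 = _
      rw [hdiff, norm_sub_sq_real, real_inner_smul_right, norm_smul,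
        Real.norm_eq_abs, abs_of_nonneg ht, mul_pow, real_inner_comm]
    have hti : t * m ≤ t * ⟪g k, p k - q⟫ := by
      by_cases h0 : 0 < φ k (p k)
      · have hmr : m = φ k (p k) := max_eq_right h0.le
        have hik : φ k (p k) ≤ ⟪g k, p k - q⟫ := by
          have h1 := haff k (p k) q
          have h2 := hsep k q hq
          linarith
        rw [hmr]
        exact mul_le_mul_of_nonneg_left hik ht
      · have hml : m = 0 := max_eq_left (not_lt.mp h0)
        have ht0 : t = 0 := by rw [htdef, hml]; ring
        rw [ht0]; simp
    -- algebraic identities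
    set M : ℝ := m ^ 2 / ‖g k‖ ^ 2 with hM
    have hM0 : 0 ≤ M := by positivity
    have e1 : t * m = β k * M := by
      rw [htdef, hM]; field_simp
    have e2 : t ^ 2 * ‖g k‖ ^ 2 = β k ^ 2 * M := by
      rw [htdef, hM]; field_simp
    have hcβ : c * β k ^ 2 * M ≤ 2 * (β k * M) - β k ^ 2 * M := by
      rw [hc]
      rw [div_mul_eq_mul_div, div_mul_eq_mul_div, div_le_iff₀ hβu0]
      nlinarith [hβk.1, hβk.2, hM0]
    rw [hexp, hΔn, e2]
    nlinarith [hti, e1]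
  have hanti : ∀ k, a (k + 1) ≤ a k := by
    intro k
    have h1 := key k
    nlinarith [sq_nonneg ‖p (k + 1) - p k‖, hcpos]
  have hmono : ∀ k, a k ≤ a 0 := by
    intro k
    induction k with
    | zero => exact le_rfl
    | succ n ih => exact le_trans (hanti n) ih
  constructor
  · refine ⟨‖p 0 - q‖ + ‖q‖, fun k => ?_⟩
    have h1 : ‖p k - q‖ ≤ ‖p 0 - q‖ := by
      have := hmono k
      have h2 : Real.sqrt (a k) ≤ Real.sqrt (a 0) := Real.sqrt_le_sqrt this
      rwa [ha, Real.sqrt_sq (norm_nonneg _), Real.sqrt_sq (norm_nonneg _)] at h2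
    calc ‖p k‖ = ‖(p k - q) + q‖ := by rw [sub_add_cancel]
      _ ≤ ‖p k - q‖ + ‖q‖ := norm_add_le _ _
      _ ≤ ‖p 0 - q‖ + ‖q‖ := by linarith
  · -- a is antitone and bounded below, hence converges
    have hA : Antitone a := antitone_nat_of_succ_le hanti
    have hbdd : BddBelow (Set.range a) := ⟨0, by rintro x ⟨k, rfl⟩; positivity⟩
    have hconv : Tendsto a atTop (nhds (⨅ k, a k)) := tendsto_atTop_ciInf hA hbdd
    have hsucc : Tendsto (fun k => a (k + 1)) atTop (nhds (⨅ k, a k)) :=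
      hconv.comp (tendsto_add_atTop_nat 1)
    have hdiff0 : Tendsto (fun k => a k - a (k + 1)) atTop (nhds 0) := by
      have := hconv.sub hsucc
      simpa using this
    have hsq : Tendsto (fun k => ‖p (k + 1) - p k‖ ^ 2) atTop (nhds 0) := by
      have hsq' : Tendsto (fun k => c * ‖p (k + 1) - p k‖ ^ 2) atTop (nhds 0) := by
        apply squeeze_zero (fun k => by positivity) (fun k => by linarith [key k]) hdiff0
      have := hsq'.const_mul c⁻¹
      simp only [inv_mul_cancel_left₀ (ne_of_gt hcpos), mul_zero] at this
      simpa [← mul_assoc, inv_mul_cancel₀ (ne_of_gt hcpos)] using this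
    have := (Real.continuous_sqrt.tendsto 0).comp hsq
    simp only [Real.sqrt_zero] at this
    convert this using 2 with k
    · exact (Real.sqrt_sq (norm_nonneg _)).symm
end
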